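/- arXiv:math/0511715 — 5 statements merged into one kernel-verified Lean document; each statement's English description precedes it below -/
import Mathlib

section
/- If a finitely generated group G satisfies: for every finite index subgroup F of G, the commutator subgroup F' equals F ∩ G', then G' is contained in every finite index subgroup of G. -/
/-! If `g ∉ F` with `F` of finite index, let `N ⊴ G` be the normal core of `F` and
`H = ⟨N, g⟩`. Then `H` has finite index and `H / N` is cyclic, so `H' ≤ N ≤ F` and `g ∉ H'`.
If moreover `g ∈ G'`, then `g ∈ H ∩ G'`, so `H' ≠ H ∩ G'`. -/

namespace Subgroup

variable {G : Type*} [Group G]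

theorem commutator_sup_zpowers_le (N : Subgroup G) [N.Normal] (g : G) :
    ⁅N ⊔ zpowers g, N ⊔ zpowers g⁆ ≤ N := by
  have hcyclic : map (QuotientGroup.mk' N) ⁅N ⊔ zpowers g, N ⊔ zpowers g⁆ = ⊥ := by
    rw [map_commutator, map_sup, QuotientGroup.map_mk'_self, bot_sup_eq, MonoidHom.map_zpowers,
      commutator_self_eq_bot_iff]
    infer_instance
  simpa only [QuotientGroup.ker_mk'] using (map_eq_bot_iff _).mp hcyclic

theorem exists_finiteIndex_mem_notMem_commutator {F : Subgroup G} [F.FiniteIndex] {g : G}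
    (hg : g ∉ F) : ∃ H : Subgroup G, H.FiniteIndex ∧ g ∈ H ∧ g ∉ ⁅H, H⁆ :=
  ⟨F.normalCore ⊔ zpowers g, finiteIndex_of_le le_sup_left, mem_sup_right (mem_zpowers g),
    fun hg' => hg (F.normalCore_le (commutator_sup_zpowers_le _ g hg'))⟩

end Subgroup

theorem stmt_4_general (G : Type*) [Group G]
    (h : ∀ F : Subgroup G, F.FiniteIndex → ⁅F, F⁆ = F ⊓ commutator G) :
    ∀ F : Subgroup G, F.FiniteIndex → commutator G ≤ F := by
  intro F hF g hg
  by_contra hgF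
  obtain ⟨H, hH, hgH, hgH'⟩ := Subgroup.exists_finiteIndex_mem_notMem_commutator hgF
  exact hgH' (h H hH ▸ ⟨hgH, hg⟩)

theorem stmt_4 (G : Type*) [Group G] [Group.FG G]
    (h : ∀ F : Subgroup G, F.FiniteIndex → ⁅F, F⁆ = F ⊓ commutator G) :
    ∀ F : Subgroup G, F.FiniteIndex → commutator G ≤ F :=
  stmt_4_general G h
end

section
/- In a free group F, if an injective endomorphism θ satisfies θ(w^j) = w^k for some element w ≠ 1 and positive integer j and integer k, and w = c^m where c generates a maximal cyclic subgroup containing w, then k is divisible by j, and θ(w) = w^{k/j}. -/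
/-!
From `θ (w ^ j) = w ^ k` and `w = c ^ m` we get `θ c ^ (m * j) = c ^ (m * k)`. In a free group,
`x ^ p = y ^ q` with `p ≠ 0` forces `x` and `y` to commute: `⟨x, y⟩` is free by Nielsen–Schreier,
and a basis with two distinct elements `s, t` would give a homomorphism `⟨x, y⟩ → ℤ²` hitting
`e₁, e₂`, while the images of `x` and `y` are parallel, so the whole image lies on a line. Two
commuting elements generate a free abelian, hence cyclic, subgroup, so maximality of `⟨c⟩` gives
`θ c = c ^ s`; comparing exponents in the torsion-free group yields `s * j = k`.
-/

open Subgroup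
open scoped IsMulCommutative

def det₂ (u v : ℤ × ℤ) : ℤ := u.1 * v.2 - u.2 * v.1

lemma det₂_eq_zero_of_zpow_eq_zpow {G : Type*} [Group G] (φ : G →* Multiplicative (ℤ × ℤ))
    {x y : G} {p q : ℤ} (hp : p ≠ 0) (h : x ^ p = y ^ q) {u v : G}
    (hu : u ∈ closure {x, y}) (hv : v ∈ closure {x, y}) :
    det₂ (φ u).toAdd (φ v).toAdd = 0 := by
  have hXY : det₂ (φ x).toAdd (φ y).toAdd = 0 := by
    have h₁ := congrArg (fun g => (φ g).toAdd) h
    simp only [map_zpow, toAdd_zpow, Prod.ext_iff, Prod.smul_fst, Prod.smul_snd,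
      smul_eq_mul] at h₁
    refine (mul_eq_zero.mp ?_).resolve_left hp
    unfold det₂
    linear_combination (φ y).toAdd.2 * h₁.1 - (φ y).toAdd.1 * h₁.2
  induction hu, hv using closure_induction₂ with
  | mem u v hu hv =>
    rcases hu with rfl | rfl <;> rcases hv with rfl | rfl <;> unfold det₂ at *
    · ring
    · exact hXY
    · linear_combination -hXY
    · ring
  | one_left => simp [det₂]
  | one_right => simp [det₂]
  | mul_left _ _ _ _ _ _ h₁ h₂ =>
    simp only [det₂, map_mul, toAdd_mul, Prod.fst_add, Prod.snd_add] at *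
    linear_combination h₁ + h₂
  | mul_right _ _ _ _ _ _ h₁ h₂ =>
    simp only [det₂, map_mul, toAdd_mul, Prod.fst_add, Prod.snd_add] at *
    linear_combination h₁ + h₂
  | inv_left _ _ _ _ h₁ =>
    simp only [det₂, map_inv, toAdd_inv, Prod.fst_neg, Prod.snd_neg] at *
    linear_combination -h₁
  | inv_right _ _ _ _ h₁ =>
    simp only [det₂, map_inv, toAdd_inv, Prod.fst_neg, Prod.snd_neg] at *
    linear_combination -h₁

lemma exists_zpowers_of_isCyclic_closure {G : Type*} [Group G] {x y : G}
    [IsCyclic (closure {x, y})] : ∃ d : G, x ∈ zpowers d ∧ y ∈ zpowers d := by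
  obtain ⟨g, hg⟩ := IsCyclic.exists_generator (α := closure {x, y})
  have mem (z : G) (hz : z ∈ closure {x, y}) : z ∈ zpowers (g : G) := by
    obtain ⟨n, hn⟩ := mem_zpowers_iff.mp (hg ⟨z, hz⟩)
    exact mem_zpowers_iff.mpr ⟨n, by simpa using congrArg Subtype.val hn⟩
  exact ⟨g, mem x (subset_closure (by simp)), mem y (subset_closure (by simp))⟩

namespace IsFreeGroup

variable {G : Type*} [Group G] [IsFreeGroup G]

lemma subsingleton_generators_of_isMulCommutative [IsMulCommutative G] :
    Subsingleton (Generators G) := by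
  classical
  by_contra hG
  obtain ⟨s, t, hst⟩ := not_subsingleton_iff_nontrivial.mp hG
  have := congrArg (lift fun u => if u = s then Equiv.swap (0 : Fin 3) 1 else Equiv.swap 1 2)
    (mul_comm (of s) (of t))
  simp only [map_mul, lift_of, if_neg hst.symm] at this
  exact absurd this (by decide)

lemma subsingleton_generators_of_zpow_eq_zpow {x y : G} (hxy : closure {x, y} = ⊤)
    {p q : ℤ} (hp : p ≠ 0) (h : x ^ p = y ^ q) : Subsingleton (Generators G) := by
  classical
  by_contra hG
  obtain ⟨s, t, hst⟩ := not_subsingleton_iff_nontrivial.mp hG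
  have := det₂_eq_zero_of_zpow_eq_zpow
    (lift fun u => Multiplicative.ofAdd (if u = s then (1, 0) else if u = t then (0, 1) else 0))
    hp h (u := of s) (v := of t) (hxy ▸ mem_top _) (hxy ▸ mem_top _)
  simp [det₂, hst.symm] at this

lemma isCyclic_of_subsingleton_generators [Subsingleton (Generators G)] : IsCyclic G := by
  have : IsCyclic (FreeGroup (Generators G)) := by
    cases isEmpty_or_nonempty (Generators G)
    · exact isCyclic_of_subsingleton
    · have := uniqueOfSubsingleton (Classical.arbitrary (Generators G))
      infer_instance
  exact isCyclic_of_surjective _ (mulEquiv G).surjective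

lemma exists_zpowers_of_commute {x y : G} (h : Commute x y) :
    ∃ d : G, x ∈ zpowers d ∧ y ∈ zpowers d := by
  have : IsMulCommutative (closure {x, y}) := isMulCommutative_closure <| by
    rintro a (rfl | rfl) b (rfl | rfl)
    exacts [rfl, h.eq, h.symm.eq, rfl]
  have := subsingleton_generators_of_isMulCommutative (G := closure {x, y})
  have := isCyclic_of_subsingleton_generators (G := closure {x, y})
  exact exists_zpowers_of_isCyclic_closure

lemma commute_of_zpow_eq_zpow {x y : G} {p q : ℤ} (hp : p ≠ 0) (h : x ^ p = y ^ q) :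
    Commute x y := by
  set H := closure {x, y}
  let x' : H := ⟨x, subset_closure (by simp)⟩
  let y' : H := ⟨y, subset_closure (by simp)⟩
  have hxy : closure {x', y'} = ⊤ := by
    rw [← closure_closure_coe_preimage (k := {x, y})]
    congr 1
    ext ⟨z, hz⟩
    simp [x', y']
  have := subsingleton_generators_of_zpow_eq_zpow hxy hp (Subtype.ext h)
  have := isCyclic_of_subsingleton_generators (G := H)
  obtain ⟨d, ⟨a, rfl⟩, ⟨b, rfl⟩⟩ := exists_zpowers_of_isCyclic_closure (x := x) (y := y)
  exact Commute.zpow_zpow_self d a b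

lemma mem_zpowers_of_commute_of_maximal {c x : G}
    (hmax : ∀ d : G, zpowers c ≤ zpowers d → zpowers d = zpowers c) (h : Commute x c) :
    x ∈ zpowers c := by
  obtain ⟨d, hx, hc⟩ := exists_zpowers_of_commute h
  rwa [← hmax d (zpowers_le.mpr hc)]

end IsFreeGroup

theorem stmt_6_general (α : Type*) (θ : FreeGroup α →* FreeGroup α)
    (w c : FreeGroup α) (hw : w ≠ 1)
    (j : ℕ) (hj : 0 < j) (k m : ℤ)
    (hwc : w = c ^ m)
    (hmax : ∀ d : FreeGroup α, Subgroup.zpowers c ≤ Subgroup.zpowers d →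
      Subgroup.zpowers d = Subgroup.zpowers c)
    (h : θ (w ^ (j : ℤ)) = w ^ k) :
    (j : ℤ) ∣ k ∧ θ w = w ^ (k / (j : ℤ)) := by
  have hj0 : (j : ℤ) ≠ 0 := by omega
  have hc : c ≠ 1 := by rintro rfl; simp [hwc] at hw
  have hm : m ≠ 0 := by rintro rfl; simp [hwc] at hw
  have hpow : θ c ^ (m * j) = c ^ (m * k) := by
    rw [zpow_mul, ← map_zpow, ← hwc, ← map_zpow, h, hwc, zpow_mul]
  obtain ⟨s, hs⟩ := mem_zpowers_iff.mp <| IsFreeGroup.mem_zpowers_of_commute_of_maximal hmax <|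
    IsFreeGroup.commute_of_zpow_eq_zpow (mul_ne_zero hm hj0) hpow
  have hsk : s * j = k := by
    have : c ^ (m * (s * j) - m * k) = 1 := by
      rw [zpow_sub, ← hpow, ← hs, ← zpow_mul, mul_left_comm, mul_inv_cancel]
    rw [IsMulTorsionFree.zpow_eq_one_iff_right hc, sub_eq_zero] at this
    exact mul_left_cancel₀ hm this
  refine ⟨⟨s, by rw [← hsk, mul_comm]⟩, ?_⟩
  rw [← hsk, Int.mul_ediv_cancel _ hj0, hwc, map_zpow, ← hs, ← zpow_mul, ← zpow_mul, mul_comm]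

theorem stmt_6 (α : Type*) (θ : FreeGroup α →* FreeGroup α)
    (hθ : Function.Injective θ) (w c : FreeGroup α) (hw : w ≠ 1)
    (j : ℕ) (hj : 0 < j) (k m : ℤ)
    (hwc : w = c ^ m)
    (hmax : ∀ d : FreeGroup α, Subgroup.zpowers c ≤ Subgroup.zpowers d →
      Subgroup.zpowers d = Subgroup.zpowers c)
    (h : θ (w ^ (j : ℤ)) = w ^ k) :
    (j : ℤ) ∣ k ∧ θ w = w ^ (k / (j : ℤ)) :=
  stmt_6_general α θ w c hw j hj k m hwc hmax h
end

section
/- In a free group, if x^n = y^n for some nonzero integer n, then x = y. -/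
theorem stmt_7 (α : Type*) (x y : FreeGroup α) (n : ℤ) (hn : n ≠ 0)
    (h : x ^ n = y ^ n) : x = y :=
  zpow_left_injective hn h
end

section
/- Let G be a group, Γ a subgroup, t ∈ G with tΓt^{-1} ≤ Γ, and suppose G is generated by Γ and t. If χ : G → ℤ is a homomorphism with χ(t) = 1 and χ(Γ) = 0, then the kernel of χ equals the union over i ≥ 0 of t^{-i} Γ t^i. -/
/-!
Since `t Γ t⁻¹ ≤ Γ`, a product `t⁻¹ ^ a * γ * t ^ b * t⁻¹ ^ c * δ * t ^ d` can be rewritten by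
pushing the surplus powers of `t` through `γ` or `δ`, so the elements `t⁻¹ ^ a * γ * t ^ b`
with `γ ∈ Γ` form a subgroup; it contains `Γ` and `t`, hence is all of `G`. Such an element is
sent by `χ` to `b - a`, so it lies in the kernel exactly when `a = b`.
-/

namespace Subgroup

variable {G : Type*} [Group G] {Γ : Subgroup G} {t : G}

theorem pow_mul_mul_inv_pow_mem (hconj : ∀ γ ∈ Γ, t * γ * t⁻¹ ∈ Γ) (k : ℕ) {γ : G}
    (hγ : γ ∈ Γ) : t ^ k * γ * t⁻¹ ^ k ∈ Γ := by
  induction k with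
  | zero => simpa using hγ
  | succ k ih =>
    have h := hconj _ ih
    rwa [show t * (t ^ k * γ * t⁻¹ ^ k) * t⁻¹ = t ^ (k + 1) * γ * t⁻¹ ^ (k + 1) by group] at h

variable (Γ t) in
def invPowMulPow (hconj : ∀ γ ∈ Γ, t * γ * t⁻¹ ∈ Γ) : Subgroup G where
  carrier := {g | ∃ (a b : ℕ), ∃ γ ∈ Γ, g = t⁻¹ ^ a * γ * t ^ b}
  one_mem' := ⟨0, 0, 1, Γ.one_mem, by simp⟩
  mul_mem' := by
    rintro _ _ ⟨a, b, γ, hγ, rfl⟩ ⟨c, d, δ, hδ, rfl⟩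
    rcases le_total c b with hcb | hbc
    · obtain ⟨e, rfl⟩ := Nat.exists_eq_add_of_le hcb
      refine ⟨a, e + d, γ * (t ^ e * δ * t⁻¹ ^ e),
        Γ.mul_mem hγ (pow_mul_mul_inv_pow_mem hconj e hδ), ?_⟩
      rw [pow_add, pow_add]; group
    · obtain ⟨e, rfl⟩ := Nat.exists_eq_add_of_le hbc
      refine ⟨a + e, d, t ^ e * γ * t⁻¹ ^ e * δ,
        Γ.mul_mem (pow_mul_mul_inv_pow_mem hconj e hγ) hδ, ?_⟩
      rw [pow_add, pow_add]; group
  inv_mem' := by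
    rintro _ ⟨a, b, γ, hγ, rfl⟩
    exact ⟨b, a, γ⁻¹, Γ.inv_mem hγ, by group⟩

theorem invPowMulPow_eq_top (hconj : ∀ γ ∈ Γ, t * γ * t⁻¹ ∈ Γ)
    (hgen : closure ((Γ : Set G) ∪ {t}) = ⊤) : invPowMulPow Γ t hconj = ⊤ := by
  refine eq_top_iff.mpr (hgen ▸ (closure_le _).mpr ?_)
  rintro x (hx | rfl)
  · exact ⟨0, 0, x, hx, by simp⟩
  · exact ⟨0, 1, 1, Γ.one_mem, by simp⟩

end Subgroup

theorem MonoidHom.map_inv_pow_mul_mul_pow {G M : Type*} [Group G] [CommGroup M] (χ : G →* M)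
    {Γ : Subgroup G} (hχΓ : ∀ γ ∈ Γ, χ γ = 1) (t : G) (a b : ℕ) {γ : G} (hγ : γ ∈ Γ) :
    χ (t⁻¹ ^ a * γ * t ^ b) = χ t ^ ((b : ℤ) - a) := by
  rw [map_mul, map_mul, map_pow, map_pow, map_inv, hχΓ γ hγ, zpow_sub, zpow_natCast,
    zpow_natCast, mul_one, inv_pow, mul_comm]

theorem stmt_8 (G : Type*) [Group G] (Γ : Subgroup G) (t : G)
    (hconj : ∀ γ ∈ Γ, t * γ * t⁻¹ ∈ Γ)
    (hgen : Subgroup.closure ((Γ : Set G) ∪ {t}) = ⊤)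
    (χ : G →* Multiplicative ℤ)
    (hχt : χ t = Multiplicative.ofAdd 1)
    (hχΓ : ∀ γ ∈ Γ, χ γ = 1) :
    ∀ g : G, g ∈ χ.ker ↔ ∃ (i : ℕ) (γ : G), γ ∈ Γ ∧ g = t⁻¹ ^ i * γ * t ^ i := by
  have hχ (a b : ℕ) {γ : G} (hγ : γ ∈ Γ) :
      χ (t⁻¹ ^ a * γ * t ^ b) = Multiplicative.ofAdd ((b : ℤ) - a) := by
    rw [χ.map_inv_pow_mul_mul_pow hχΓ t a b hγ, hχt, ← Int.ofAdd_mul, one_mul]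
  intro g
  constructor
  · intro hg
    obtain ⟨a, b, γ, hγ, rfl⟩ : g ∈ Γ.invPowMulPow t hconj :=
      Γ.invPowMulPow_eq_top hconj hgen ▸ Subgroup.mem_top g
    rw [MonoidHom.mem_ker, hχ a b hγ, ofAdd_eq_one, sub_eq_zero, Nat.cast_inj] at hg
    exact ⟨a, γ, hγ, by rw [hg]⟩
  · rintro ⟨i, γ, hγ, rfl⟩
    rw [MonoidHom.mem_ker, χ.map_inv_pow_mul_mul_pow hχΓ t i i hγ, sub_self, zpow_zero]
end

section
/- A nontrivial free group F has no nontrivial finitely generated normal subgroup of infinite index. Consequently, if χ : F_n → ℤ is a surjective homomorphism from a non-abelian free group, then ker χ is infinitely generated (not finitely generated). -/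
/-!
Let `N = ⟨S⟩` be normal and nontrivial, with `S` finite and all of its elements of length at most
`R`. Every prefix of the reduced word of an element of `⟨S⟩` lies within distance `R` of `⟨S⟩`.
Choose a cyclically reduced `v ≠ 1` in `N`. For any `g` and `k = |g|`, the reduced word of
`g v²ᵏ g⁻¹ ∈ N` begins with that of `g vᵏ`, so `g vᵏ` is within distance `R` of some `m ∈ N`, and
`m⁻¹ g vᵏ` is an element of the coset `gN` of length at most `R`. Over a finite alphabet this
leaves finitely many cosets.

The alphabet is indeed finite: a letter `t` not occurring in `S` would be killed by a retraction
that fixes `N` pointwise, hence fixes `t⁻¹ u t` for `u ∈ S`; then `t` commutes with `u`, which is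
impossible in a free group.
-/

namespace FreeGroup

variable {α : Type*}

section

open List

theorem IsReduced.exists_eq_append_invRev_append {L₁ L₂ : List (α × Bool)}
    (h₁ : IsReduced L₁) (h₂ : IsReduced L₂) :
    ∃ P C Q, L₁ = P ++ C ∧ L₂ = invRev C ++ Q ∧ IsReduced (P ++ Q) := by
  induction L₁ using List.reverseRecOn generalizing L₂ with
  | nil => exact ⟨[], [], L₂, rfl, rfl, h₂⟩
  | append_singleton L p ih =>
    cases L₂ with
    | nil => exact ⟨L ++ [p], [], [], by simp, rfl, by simpa using h₁⟩
    | cons q L₂ =>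
      by_cases hq : q = (p.1, !p.2)
      · obtain ⟨P, C, Q, rfl, rfl, hPQ⟩ :=
          ih (h₁.infix (List.prefix_append _ _).isInfix) (h₂.infix (List.suffix_cons _ _).isInfix)
        exact ⟨P, C ++ [p], Q, by simp, by simp [invRev, hq], hPQ⟩
      · refine ⟨L ++ [p], [], q :: L₂, by simp, rfl, h₁.append_overlap ?_ (cons_ne_nil _ _)⟩
        refine isReduced_cons_cons.mpr ⟨fun h => ?_, h₂⟩
        obtain ⟨p1, p2⟩ := p
        obtain ⟨q1, q2⟩ := q
        simp only at h ⊢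
        cases p2 <;> cases q2 <;> simp_all

variable [DecidableEq α]

theorem exists_toWord_mul_eq_append (x y : FreeGroup α) :
    ∃ P C Q, x.toWord = P ++ C ∧ y.toWord = invRev C ++ Q ∧ (x * y).toWord = P ++ Q := by
  obtain ⟨P, C, Q, hx, hy, hPQ⟩ :=
    isReduced_toWord.exists_eq_append_invRev_append (isReduced_toWord (x := y))
  refine ⟨P, C, Q, hx, hy, ?_⟩
  have : x * y = mk (P ++ Q) := by
    rw [← mk_toWord (x := x), ← mk_toWord (x := y), hx, hy, ← mul_mk, ← mul_mk, ← mul_mk,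
      ← inv_mk]
    group
  rw [this, toWord_mk, hPQ.reduce_eq]

theorem prefix_toWord_mul {x y : FreeGroup α} {A B : List (α × Bool)} (hx : x.toWord = A ++ B)
    (hy : norm y ≤ B.length) : A <+: (x * y).toWord := by
  obtain ⟨P, C, Q, hPC, hCQ, hPQ⟩ := exists_toWord_mul_eq_append x y
  have hC : C.length ≤ B.length := by
    have := congrArg length hCQ
    simp only [length_append, invRev_length] at this
    simp only [norm] at hy
    omega
  have hlen : A.length + B.length = P.length + C.length := by
    simpa using congrArg length (hx.symm.trans hPC)
  have hAP : A <+: P :=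
    prefix_of_prefix_length_le (hx ▸ prefix_append A B) (hPC ▸ prefix_append P C) (by omega)
  exact hPQ ▸ hAP.trans (prefix_append P Q)

theorem suffix_toWord_mul {x y : FreeGroup α} {B D : List (α × Bool)} (hy : y.toWord = B ++ D)
    (hx : norm x ≤ B.length) : D <:+ (x * y).toWord := by
  obtain ⟨P, C, Q, hPC, hCQ, hPQ⟩ := exists_toWord_mul_eq_append x y
  have hC : C.length ≤ B.length := by
    have := congrArg length hPC
    simp only [length_append] at this
    simp only [norm] at hx
    omega
  have hlen : B.length + D.length = C.length + Q.length := by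
    simpa using congrArg length (hy.symm.trans hCQ)
  have hDQ : D <:+ Q :=
    suffix_of_suffix_length_le (hy ▸ suffix_append B D) (hCQ ▸ suffix_append _ Q) (by omega)
  exact hPQ ▸ hDQ.trans (suffix_append P Q)

theorem toWord_mk_of_infix {x : FreeGroup α} {L : List (α × Bool)} (h : L <:+: x.toWord) :
    (mk L).toWord = L := by
  rw [toWord_mk, (isReduced_toWord.infix h).reduce_eq]

theorem exists_eq_mul_of_prefix_toWord_mul {x y z : FreeGroup α}
    (h : z.toWord <+: (x * y).toWord) :
    z.toWord <+: x.toWord ∨ ∃ w : FreeGroup α, w.toWord <+: y.toWord ∧ z = x * w := by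
  obtain ⟨P, C, Q, hPC, hCQ, hPQ⟩ := exists_toWord_mul_eq_append x y
  rw [hPQ] at h
  rcases le_or_gt z.toWord.length P.length with hle | hlt
  · exact .inl ((prefix_of_prefix_length_le h (prefix_append P Q) hle).trans
      (hPC ▸ prefix_append P C))
  · obtain ⟨R, hR⟩ := prefix_of_prefix_length_le (prefix_append P Q) h hlt.le
    have hRQ : R <+: Q := (prefix_append_right_inj P).mp (hR ▸ h)
    have hw : invRev C ++ R <+: y.toWord := hCQ ▸ (prefix_append_right_inj _).mpr hRQ
    refine .inr ⟨mk (invRev C ++ R), (toWord_mk_of_infix hw.isInfix).symm ▸ hw, ?_⟩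
    rw [← mk_toWord (x := z), ← mk_toWord (x := x), ← hR, hPC, ← mul_mk, ← mul_mk, ← mul_mk,
      ← inv_mk]
    group

theorem exists_eq_inv_mul_of_prefix_toWord_inv {x z : FreeGroup α}
    (h : z.toWord <+: x⁻¹.toWord) :
    ∃ w : FreeGroup α, w.toWord <+: x.toWord ∧ z = x⁻¹ * w := by
  obtain ⟨R, hR⟩ := h
  have hx : x.toWord = invRev R ++ invRev z.toWord := by
    rw [← invRev_append, hR, toWord_inv, invRev_invRev]
  have hw : invRev R <+: x.toWord := hx ▸ prefix_append _ _
  refine ⟨mk (invRev R), (toWord_mk_of_infix hw.isInfix).symm ▸ hw, ?_⟩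
  rw [← mk_toWord (x := x), hx, ← mul_mk, ← inv_mk, ← inv_mk, mk_toWord]
  group

theorem exists_isCyclicallyReduced_conj (u : FreeGroup α) :
    ∃ c : FreeGroup α, IsCyclicallyReduced (c * u * c⁻¹).toWord := by
  set c := mk (reduceCyclically.conjugator u.toWord)
  have hu : c * mk (reduceCyclically u.toWord) * c⁻¹ = u := by
    rw [inv_mk, mul_mk, mul_mk, reduceCyclically.conj_conjugator_reduceCyclically, mk_toWord]
  refine ⟨c⁻¹, ?_⟩
  have hred := reduceCyclically.isCyclicallyReduced (isReduced_toWord (x := u))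
  rwa [← hu, inv_inv, show ∀ a b : FreeGroup α, a⁻¹ * (a * b * a⁻¹) * a = b by intros; group,
    toWord_mk, hred.isReduced.reduce_eq]

theorem toWord_pow_of_isCyclicallyReduced {v : FreeGroup α} (hv : IsCyclicallyReduced v.toWord)
    (k : ℕ) : (v ^ k).toWord = (replicate k v.toWord).flatten := by
  rw [toWord_pow, ((hv.flatten_replicate k).isReduced).reduce_eq]

theorem prefix_toWord_mul_pow_conj {g v : FreeGroup α} (hv : IsCyclicallyReduced v.toWord)
    {k : ℕ} (hk : norm g ≤ k * norm v) :
    (g * v ^ k).toWord <+: (g * v ^ (2 * k) * g⁻¹).toWord := by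
  have hlen : (v ^ k).toWord.length = k * norm v := by
    simp [toWord_pow_of_isCyclicallyReduced hv, norm]
  have h2k : (v ^ (2 * k)).toWord = (v ^ k).toWord ++ (v ^ k).toWord := by
    simp only [toWord_pow_of_isCyclicallyReduced hv, two_mul, replicate_add, flatten_append]
  obtain ⟨A, hA⟩ := suffix_toWord_mul (x := g) h2k (hlen ▸ hk)
  have hgA : (g * v ^ k).toWord = A := by
    have : g * v ^ (2 * k) = mk A * v ^ k := by
      rw [← mk_toWord (x := g * _), ← hA, ← mul_mk, mk_toWord]
    rw [show g * v ^ k = mk A by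
      rw [← mul_inv_eq_iff_eq_mul.mpr this, two_mul, pow_add]; group]
    exact toWord_mk_of_infix (hA ▸ (prefix_append A _).isInfix)
  exact hgA ▸ prefix_toWord_mul hA.symm (by rw [norm_inv_eq]; omega)

theorem eq_one_of_commute_of_forall_ne {t : α} {u : FreeGroup α} (h : Commute (of t) u)
    (ht : ∀ p ∈ u.toWord, p.1 ≠ t) : u = 1 := by
  rw [← toWord_eq_nil_iff]
  rcases hW : u.toWord with _ | ⟨q, W⟩
  · rfl
  rw [hW] at ht
  have hleft : (of t * u).toWord = (t, true) :: q :: W := by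
    rw [toWord_mul, toWord_of, hW, cons_append, nil_append, IsReduced.reduce_eq]
    exact isReduced_cons_cons.mpr ⟨fun h' => absurd h'.symm (ht q mem_cons_self),
      hW ▸ isReduced_toWord⟩
  have hright : (u * of t).toWord = q :: W ++ [(t, true)] := by
    rw [toWord_mul, toWord_of, hW, IsReduced.reduce_eq]
    refine isChain_append.mpr ⟨hW ▸ isReduced_toWord, isChain_singleton _, ?_⟩
    intro x hx y hy hxy
    simp only [head?_cons, Option.mem_def, Option.some.injEq] at hy
    exact absurd (hxy.trans (congrArg Prod.fst hy).symm) (ht x (mem_of_mem_getLast? hx))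
  have := congrArg head? (hleft.symm.trans (h.eq ▸ hright))
  simp only [head?_cons, cons_append, Option.some.injEq] at this
  exact absurd (congrArg Prod.fst this).symm (ht q mem_cons_self)

end

section

variable [DecidableEq α]

theorem exists_mem_closure_norm_inv_mul_le {S : Set (FreeGroup α)} {R : ℕ}
    (hS : ∀ x ∈ S, norm x ≤ R) {x : FreeGroup α} (hx : x ∈ Subgroup.closure S) :
    ∀ z : FreeGroup α, z.toWord <+: x.toWord →
      ∃ m ∈ Subgroup.closure S, norm (m⁻¹ * z) ≤ R := by
  induction hx using Subgroup.closure_induction with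
  | mem x hx =>
    intro z hz
    exact ⟨1, one_mem _, by simpa [norm] using hz.length_le.trans (hS x hx)⟩
  | one =>
    intro z hz
    rw [toWord_one, List.prefix_nil, toWord_eq_nil_iff] at hz
    exact ⟨1, one_mem _, by simp [hz, norm_one]⟩
  | mul x y hx hy ihx ihy =>
    intro z hz
    rcases exists_eq_mul_of_prefix_toWord_mul hz with hz | ⟨w, hw, rfl⟩
    · exact ihx z hz
    · obtain ⟨m, hm, hmw⟩ := ihy w hw
      exact ⟨x * m, mul_mem hx hm, by rwa [mul_inv_rev, mul_assoc, inv_mul_cancel_left]⟩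
  | inv x hx ihx =>
    intro z hz
    obtain ⟨w, hw, rfl⟩ := exists_eq_inv_mul_of_prefix_toWord_inv hz
    obtain ⟨m, hm, hmw⟩ := ihx w hw
    exact ⟨x⁻¹ * m, mul_mem (inv_mem hx) hm,
      by rwa [mul_inv_rev, mul_assoc, inv_mul_cancel_left]⟩

theorem exists_mk_eq_norm_le {N : Subgroup (FreeGroup α)} [N.Normal] (hN : N ≠ ⊥)
    {S : Set (FreeGroup α)} (hSN : Subgroup.closure S = N) {R : ℕ} (hS : ∀ x ∈ S, norm x ≤ R)
    (g : FreeGroup α) : ∃ x : FreeGroup α, (x : FreeGroup α ⧸ N) = g ∧ norm x ≤ R := by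
  obtain ⟨u, huN, hu⟩ := N.bot_or_exists_ne_one.resolve_left hN
  obtain ⟨c, hv⟩ := exists_isCyclicallyReduced_conj u
  set v := c * u * c⁻¹
  have hvN : v ∈ N := ‹N.Normal›.conj_mem u huN c
  have hv1 : 1 ≤ norm v := Nat.one_le_iff_ne_zero.mpr <| norm_eq_zero.not.mpr <| by
    simpa [v] using hu
  have hk : norm g ≤ norm g * norm v := Nat.le_mul_of_pos_right _ hv1
  have hconj : g * v ^ (2 * norm g) * g⁻¹ ∈ N := ‹N.Normal›.conj_mem _ (pow_mem hvN _) g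
  obtain ⟨m, hm, hmR⟩ := exists_mem_closure_norm_inv_mul_le hS (hSN ▸ hconj) _
    (prefix_toWord_mul_pow_conj hv hk)
  refine ⟨m⁻¹ * (g * v ^ norm g), QuotientGroup.eq.mpr ?_, hmR⟩
  have hgm : g⁻¹ * m * g ∈ N := by
    simpa using ‹N.Normal›.conj_mem m (hSN ▸ hm) g⁻¹
  simpa [mul_assoc] using mul_mem (inv_mem (pow_mem hvN (norm g))) hgm

theorem finite_setOf_norm_le [Finite α] (R : ℕ) : {x : FreeGroup α | norm x ≤ R}.Finite :=
  (List.finite_length_le (α × Bool) R).preimage toWord_injective.injOn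

theorem lift_apply_eq_self {f : α → FreeGroup α} {x : FreeGroup α}
    (hf : ∀ p ∈ x.toWord, f p.1 = of p.1) : lift f x = x := by
  calc lift f x = lift of x := by
        rw [← mk_toWord (x := x), lift_mk, lift_mk,
          List.map_congr_left fun p hp => by rw [hf p hp]]
    _ = x := by rw [lift_of_eq_id, MonoidHom.id_apply]

end

theorem finite_of_fg_of_ne_bot {N : Subgroup (FreeGroup α)} [N.Normal] (hfg : N.FG)
    (hN : N ≠ ⊥) : Finite α := by
  classical
  obtain ⟨S, hSN, hS⟩ := (Subgroup.fg_iff N).mp hfg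
  obtain ⟨u, huS, hu⟩ : ∃ u ∈ S, u ≠ 1 := by
    by_contra! h
    exact hN (hSN ▸ Subgroup.closure_eq_bot_iff.mpr h)
  set T : Set α := ⋃ x ∈ S, Prod.fst '' {p | p ∈ x.toWord}
  have hT : T.Finite := hS.biUnion fun x _ => (List.finite_toSet _).image _
  refine Set.finite_univ_iff.mp (Set.eq_univ_of_forall (fun t => ?_) ▸ hT)
  by_contra ht
  set π := lift fun a => if a ∈ T then of a else 1
  have hπS : ∀ x ∈ S, π x = x := fun x hx => lift_apply_eq_self fun p hp =>
    if_pos (show p.1 ∈ T from Set.mem_biUnion hx ⟨p, hp, rfl⟩)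
  have hπN : ∀ n ∈ N, π n = n := fun n hn =>
    (Subgroup.closure_le (π.eqLocus (MonoidHom.id _))).mpr hπS (hSN ▸ hn)
  have hconj : (of t)⁻¹ * u * of t = u := by
    have hmem : (of t)⁻¹ * u * of t ∈ N := by
      simpa using ‹N.Normal›.conj_mem u (hSN ▸ Subgroup.subset_closure huS) (of t)⁻¹
    rw [← hπN _ hmem, _root_.map_mul, _root_.map_mul, _root_.map_inv, hπS u huS, lift_apply_of,
      if_neg ht]
    group
  refine hu (eq_one_of_commute_of_forall_ne (t := t) ?_ fun p hp hpt => ht ?_)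
  · calc of t * u = of t * ((of t)⁻¹ * u * of t) := by rw [hconj]
      _ = u * of t := by group
  · exact Set.mem_biUnion huS ⟨p, hp, hpt⟩

theorem finiteIndex_of_fg_of_ne_bot {N : Subgroup (FreeGroup α)} [N.Normal]
    (hfg : N.FG) (hN : N ≠ ⊥) : N.FiniteIndex := by
  classical
  have := finite_of_fg_of_ne_bot hfg hN
  obtain ⟨S, hSN, hS⟩ := (Subgroup.fg_iff N).mp hfg
  obtain ⟨R, hR⟩ := (hS.image norm).bddAbove
  have : Finite (FreeGroup α ⧸ N) := by
    refine Set.finite_univ_iff.mp <|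
      ((finite_setOf_norm_le (α := α) R).image QuotientGroup.mk).subset fun q _ => ?_
    obtain ⟨g, rfl⟩ := QuotientGroup.mk_surjective q
    obtain ⟨x, hx, hxR⟩ := exists_mk_eq_norm_le hN hSN (fun x hx => hR ⟨x, hx, rfl⟩) g
    exact ⟨x, hxR, hx⟩
  exact N.finiteIndex_of_finite_quotient

theorem not_commute_of_of_ne {a b : α} (hab : a ≠ b) : ¬Commute (of a) (of b) := by
  classical
  exact fun h => of_ne_one b (eq_one_of_commute_of_forall_ne h (by simp [toWord_of, Ne.symm hab]))

theorem ker_ne_bot_of_commGroup {G : Type*} [CommGroup G] (χ : FreeGroup α →* G) {a b : α}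
    (hab : a ≠ b) : χ.ker ≠ ⊥ := fun h =>
  not_commute_of_of_ne hab <| (MonoidHom.ker_eq_bot_iff χ).mp h <| by
    rw [_root_.map_mul, _root_.map_mul, mul_comm]

end FreeGroup

theorem stmt_13 :
    (∀ (α : Type) [Nontrivial (FreeGroup α)] (N : Subgroup (FreeGroup α)) [N.Normal],
        N ≠ ⊥ → N.FG → N.FiniteIndex) ∧
    (∀ (α : Type) (a b : α), a ≠ b →
      ∀ χ : FreeGroup α →* Multiplicative ℤ, Function.Surjective χ → ¬ χ.ker.FG) := by
  refine ⟨fun α _ N _ hN hfg => FreeGroup.finiteIndex_of_fg_of_ne_bot hfg hN, ?_⟩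
  intro α a b hab χ hχ hfg
  have hker : χ.ker ≠ ⊥ := FreeGroup.ker_ne_bot_of_commGroup χ hab
  refine (FreeGroup.finiteIndex_of_fg_of_ne_bot hfg hker).index_ne_zero ?_
  rw [Subgroup.index_ker, MonoidHom.range_eq_top.mpr hχ, Subgroup.card_top,
    Nat.card_eq_zero_of_infinite]
end
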